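/- (Asymptotic converse.) Suppose the conditional Rényi entropy-rate H := lim_{n→∞} H_ᾱ(X^n|Y^n)/n exists and let R₁, R₂ > 0. For every sequence (Q_n) of stochastic encoders, where Q_n has hint sets ℳ₁⁽ⁿ⁾ of size ⌈2^{nR₁}⌉ and ℳ₂⁽ⁿ⁾ of size ⌈2^{nR₂}⌉, if lim_{n→∞} A_B^g(Q_n) = 1, then liminf_{n→∞} (1/n) log A_E(Q_n) ≤ ρ·min(R₁, R₂, H). -/

import Mathlib

open Real Finset Filter
open scoped Classical

noncomputable section

/-- `G` is a guessing function for `𝒳` given side-information in `W`: for each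
side-information value `w`, `x ↦ G x w` is a bijection from `𝒳` onto `{1, …, |𝒳|}`. -/
def IsGuessing {𝒳 W : Type*} [Fintype 𝒳] (G : 𝒳 → W → ℕ) : Prop :=
  ∀ w : W, (Function.Injective fun x => G x w) ∧
    ∀ x, G x w ∈ Finset.Icc 1 (Fintype.card 𝒳)

/-- `P` is a probability mass function on `𝒳 × 𝒴` (written in curried form). -/
def IsPMF {𝒳 𝒴 : Type*} [Fintype 𝒳] [Fintype 𝒴] (P : 𝒳 → 𝒴 → ℝ) : Prop :=
  (∀ x y, 0 ≤ P x y) ∧ ∑ x, ∑ y, P x y = 1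

/-- `Q` is a conditional PMF on `M` given `(x, y)`. -/
def IsCondPMF {𝒳 𝒴 M : Type*} [Fintype M] (Q : 𝒳 → 𝒴 → M → ℝ) : Prop :=
  ∀ x y, (∀ m, 0 ≤ Q x y m) ∧ ∑ m, Q x y m = 1

/-- Conditional Rényi entropy of order `α` (base-2 logarithms). -/
def condRenyi {𝒳 𝒴 : Type*} [Fintype 𝒳] [Fintype 𝒴] (α : ℝ) (P : 𝒳 → 𝒴 → ℝ) : ℝ :=
  (α / (1 - α)) * Real.logb 2 (∑ y, (∑ x, P x y ^ α) ^ (1 / α))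

/-- Bob's guessing ambiguity: the least `ρ`-th guessing moment over guessing
functions for `X` given `(Y, M₁, M₂)`. -/
def bobGuessAmb {𝒳 𝒴 M₁ M₂ : Type*} [Fintype 𝒳] [Fintype 𝒴] [Fintype M₁] [Fintype M₂]
    (ρ : ℝ) (P : 𝒳 → 𝒴 → ℝ) (Q : 𝒳 → 𝒴 → M₁ × M₂ → ℝ) : ℝ :=
  sInf { e | ∃ G : 𝒳 → 𝒴 × M₁ × M₂ → ℕ, IsGuessing G ∧
    e = ∑ x, ∑ y, ∑ m : M₁ × M₂, P x y * Q x y m * (G x (y, m) : ℝ) ^ ρ }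

/-- Eve's ambiguity: the least `ρ`-th moment of the minimum of two guessing
functions, one for `X` given `(Y, M₁)` and one for `X` given `(Y, M₂)`. -/
def eveAmb {𝒳 𝒴 M₁ M₂ : Type*} [Fintype 𝒳] [Fintype 𝒴] [Fintype M₁] [Fintype M₂]
    (ρ : ℝ) (P : 𝒳 → 𝒴 → ℝ) (Q : 𝒳 → 𝒴 → M₁ × M₂ → ℝ) : ℝ :=
  sInf { e | ∃ G₁ : 𝒳 → 𝒴 × M₁ → ℕ, ∃ G₂ : 𝒳 → 𝒴 × M₂ → ℕ,
    IsGuessing G₁ ∧ IsGuessing G₂ ∧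
    e = ∑ x, ∑ y, ∑ m : M₁ × M₂, P x y * Q x y m *
      ((min (G₁ x (y, m.1)) (G₂ x (y, m.2)) : ℕ) : ℝ) ^ ρ }

/-- Bob's list ambiguity: the `ρ`-th moment of the size of the list of all `x`
with positive posterior probability given `(Y, M₁, M₂)`. -/
def bobListAmb {𝒳 𝒴 M₁ M₂ : Type*} [Fintype 𝒳] [Fintype 𝒴] [Fintype M₁] [Fintype M₂]
    (ρ : ℝ) (P : 𝒳 → 𝒴 → ℝ) (Q : 𝒳 → 𝒴 → M₁ × M₂ → ℝ) : ℝ :=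
  ∑ x, ∑ y, ∑ m : M₁ × M₂, P x y * Q x y m *
    ((Finset.univ.filter fun x' => 0 < P x' y * Q x' y m).card : ℝ) ^ ρ

/-! Eve can run Bob's guesser without one of the hints: listing `x` by the best rank of Bob's
guesser over the unseen hint `m₂` costs at most a factor `|ℳ₂|` in guesses, so
`A_E ≤ |ℳ₂| ^ ρ · A_B^g`, and likewise for `ℳ₁`; with `|ℳᵢ| = ⌈2 ^ (n Rᵢ)⌉` and `A_B^g → 1`
this gives the rates `ρ Rᵢ`. Ignoring both hints and guessing in decreasing order of
`P(x | y)`, Arikan's bound gives `A_E ≤ 2 ^ (ρ H_ᾱ(Xⁿ | Yⁿ))`, hence the rate `ρ H`. -/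

section Ranking
variable {α γ : Type*} [Fintype α] [LinearOrder γ]

def rankBy (k : α → γ) (x : α) : ℕ := #{x' | k x' ≤ k x}

lemma rankBy_mem_Icc (k : α → γ) (x : α) : rankBy k x ∈ Icc 1 (Fintype.card α) :=
  mem_Icc.mpr ⟨card_pos.mpr ⟨x, by simp⟩, card_filter_le _ _⟩

lemma rankBy_lt_rankBy {k : α → γ} {x y : α} (h : k x < k y) : rankBy k x < rankBy k y := by
  refine card_lt_card ⟨fun x' hx' => ?_, fun hsub => ?_⟩
  · simp only [mem_filter, mem_univ, true_and] at hx' ⊢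
    exact hx'.trans h.le
  · have : k y ≤ k x := by simpa using hsub (by simp : y ∈ ({x' | k x' ≤ k y} : Finset α))
    exact this.not_gt h

lemma rankBy_injective {k : α → γ} (hk : Function.Injective k) :
    Function.Injective (rankBy k) := by
  intro x y hxy
  by_contra hne
  rcases (hk.ne hne).lt_or_gt with h | h
  · exact (rankBy_lt_rankBy h).ne hxy
  · exact (rankBy_lt_rankBy h).ne' hxy

end Ranking

section Guessing
variable {𝒳 W : Type*} [Fintype 𝒳]

lemma IsGuessing.comp {G : 𝒳 → W → ℕ} (hG : IsGuessing G) {W' : Type*} (f : W' → W) :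
    IsGuessing fun x w => G x (f w) :=
  fun w => hG (f w)

lemma IsGuessing.one_le {G : 𝒳 → W → ℕ} (hG : IsGuessing G) (x : 𝒳) (w : W) : 1 ≤ G x w :=
  (mem_Icc.mp ((hG w).2 x)).1

lemma IsGuessing.card_filter_le {G : 𝒳 → W → ℕ} (hG : IsGuessing G) (w : W) (t : ℕ) :
    #{x | G x w ≤ t} ≤ t := by
  simpa using card_le_card_of_injOn (fun x => G x w) (t := Icc 1 t)
    (fun x hx => mem_Icc.mpr ⟨hG.one_le x w, (mem_filter.mp hx).2⟩)
    (fun _ _ _ _ h => (hG w).1 h)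

def guessBy {β : Type*} [LinearOrder β] (s : W → 𝒳 → β) (x : 𝒳) (w : W) : ℕ :=
  rankBy (fun x' => toLex (s w x', Fintype.equivFin 𝒳 x')) x

variable {β : Type*} [LinearOrder β]

lemma isGuessing_guessBy (s : W → 𝒳 → β) : IsGuessing (guessBy s) := fun _ =>
  ⟨rankBy_injective fun _ _ h => (Fintype.equivFin 𝒳).injective (congrArg Prod.snd h),
    rankBy_mem_Icc _⟩

lemma guessBy_le_card (s : W → 𝒳 → β) (x : 𝒳) (w : W) :
    guessBy s x w ≤ #{x' | s w x' ≤ s w x} :=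
  card_le_card fun _ hx' => by
    simp only [mem_filter, mem_univ, true_and] at hx' ⊢
    exact Prod.Lex.monotone_fst _ _ hx'

lemma exists_isGuessing (𝒳 W : Type*) [Fintype 𝒳] : ∃ G : 𝒳 → W → ℕ, IsGuessing G :=
  ⟨_, isGuessing_guessBy fun (_ : W) (_ : 𝒳) => (0 : ℕ)⟩

/-- Guessing by the best rank over the unseen `v` loses at most a factor `|V|`, since each `v`
contributes at most `t` candidates of rank `≤ t`. -/
lemma guessBy_iInf_le_card_mul {V : Type*} [Fintype V] [Nonempty V] {G : 𝒳 → W × V → ℕ}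
    (hG : IsGuessing G) (x : 𝒳) (w : W) (v : V) :
    guessBy (fun w x => ⨅ v, G x (w, v)) x w ≤ Fintype.card V * G x (w, v) := by
  set t := ⨅ v, G x (w, v)
  have hcover : ({x' | ⨅ v, G x' (w, v) ≤ t} : Finset 𝒳) ⊆
      univ.biUnion fun v => ({x' | G x' (w, v) ≤ t} : Finset 𝒳) := fun x' hx' => by
    obtain ⟨v', hv'⟩ := exists_eq_ciInf_of_finite (f := fun v => G x' (w, v))
    simp only [mem_filter, mem_univ, true_and, mem_biUnion] at hx' ⊢
    exact ⟨v', hv' ▸ hx'⟩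
  calc guessBy (fun w x => ⨅ v, G x (w, v)) x w ≤ #{x' | ⨅ v, G x' (w, v) ≤ t} :=
        guessBy_le_card _ x w
    _ ≤ ∑ v, #{x' | G x' (w, v) ≤ t} := (card_le_card hcover).trans card_biUnion_le
    _ ≤ ∑ _v : V, t := sum_le_sum fun v _ => (hG.comp id).card_filter_le (w, v) t
    _ = Fintype.card V * t := by simp
    _ ≤ Fintype.card V * G x (w, v) := Nat.mul_le_mul_left _ (ciInf_le (OrderBot.bddBelow _) v)

end Guessing

section JointExpect
variable {𝒳 𝒴 M : Type*} [Fintype 𝒳] [Fintype 𝒴] [Fintype M]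
  {P : 𝒳 → 𝒴 → ℝ} {Q : 𝒳 → 𝒴 → M → ℝ}

def jointExpect (P : 𝒳 → 𝒴 → ℝ) (Q : 𝒳 → 𝒴 → M → ℝ) (f : 𝒳 → 𝒴 → M → ℝ) : ℝ :=
  ∑ x, ∑ y, ∑ m, P x y * Q x y m * f x y m

lemma jointExpect_mono (hP : IsPMF P) (hQ : IsCondPMF Q) {f g : 𝒳 → 𝒴 → M → ℝ}
    (hfg : ∀ x y m, f x y m ≤ g x y m) : jointExpect P Q f ≤ jointExpect P Q g :=
  sum_le_sum fun x _ => sum_le_sum fun y _ => sum_le_sum fun m _ =>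
    mul_le_mul_of_nonneg_left (hfg x y m) (mul_nonneg (hP.1 x y) ((hQ x y).1 m))

lemma jointExpect_const_mul (c : ℝ) (f : 𝒳 → 𝒴 → M → ℝ) :
    jointExpect P Q (fun x y m => c * f x y m) = c * jointExpect P Q f := by
  simp only [jointExpect, mul_sum]
  exact sum_congr rfl fun _ _ => sum_congr rfl fun _ _ => sum_congr rfl fun _ _ => by ring

lemma jointExpect_eq_sum_sum (hQ : IsCondPMF Q) (g : 𝒳 → 𝒴 → ℝ) :
    jointExpect P Q (fun x y _ => g x y) = ∑ x, ∑ y, P x y * g x y := by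
  refine sum_congr rfl fun x _ => sum_congr rfl fun y _ => ?_
  rw [← sum_mul, ← mul_sum, (hQ x y).2, mul_one]

lemma jointExpect_const (hP : IsPMF P) (hQ : IsCondPMF Q) (c : ℝ) :
    jointExpect P Q (fun _ _ _ => c) = c := by
  rw [jointExpect_eq_sum_sum hQ]
  simp only [← sum_mul, hP.2, one_mul]

end JointExpect

section Eve
variable {𝒳 𝒴 M₁ M₂ : Type*} [Fintype 𝒳] [Fintype 𝒴] [Fintype M₁] [Fintype M₂]
  {ρ : ℝ} {P : 𝒳 → 𝒴 → ℝ} {Q : 𝒳 → 𝒴 → M₁ × M₂ → ℝ}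

lemma eveAmb_le_jointExpect (hρ : 0 ≤ ρ) (hP : IsPMF P) (hQ : IsCondPMF Q)
    {G₁ : 𝒳 → 𝒴 × M₁ → ℕ} {G₂ : 𝒳 → 𝒴 × M₂ → ℕ} (h₁ : IsGuessing G₁) (h₂ : IsGuessing G₂)
    {g : 𝒳 → 𝒴 → M₁ × M₂ → ℝ}
    (hg : ∀ x y m, ((min (G₁ x (y, m.1)) (G₂ x (y, m.2)) : ℕ) : ℝ) ≤ g x y m) :
    eveAmb ρ P Q ≤ jointExpect P Q fun x y m => g x y m ^ ρ := by
  have hbdd : BddBelow {e | ∃ G₁ : 𝒳 → 𝒴 × M₁ → ℕ, ∃ G₂ : 𝒳 → 𝒴 × M₂ → ℕ,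
      IsGuessing G₁ ∧ IsGuessing G₂ ∧ e = jointExpect P Q fun x y m =>
        ((min (G₁ x (y, m.1)) (G₂ x (y, m.2)) : ℕ) : ℝ) ^ ρ} := by
    refine ⟨0, ?_⟩
    rintro _ ⟨G₁, G₂, -, -, rfl⟩
    simpa [jointExpect_const hP hQ] using
      jointExpect_mono hP hQ (f := fun _ _ _ => 0) fun _ _ _ => by positivity
  exact (csInf_le hbdd ⟨G₁, G₂, h₁, h₂, rfl⟩).trans
    (jointExpect_mono hP hQ fun x y m => rpow_le_rpow (by positivity) (hg x y m) hρ)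

lemma one_le_eveAmb (hρ : 0 ≤ ρ) (hP : IsPMF P) (hQ : IsCondPMF Q) : 1 ≤ eveAmb ρ P Q := by
  obtain ⟨G₁, h₁⟩ := exists_isGuessing 𝒳 (𝒴 × M₁)
  obtain ⟨G₂, h₂⟩ := exists_isGuessing 𝒳 (𝒴 × M₂)
  refine le_csInf ⟨_, G₁, G₂, h₁, h₂, rfl⟩ ?_
  rintro _ ⟨G₁, G₂, h₁, h₂, rfl⟩
  calc (1 : ℝ) = jointExpect P Q fun _ _ _ => 1 := (jointExpect_const hP hQ 1).symm
    _ ≤ _ := jointExpect_mono hP hQ fun x y m => one_le_rpow (by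
        exact_mod_cast le_min (h₁.one_le x (y, m.1)) (h₂.one_le x (y, m.2))) hρ

lemma eveAmb_le_rpow_mul_bobGuessAmb {c : ℕ} (hc : 0 < c) (hρ : 0 ≤ ρ) (hP : IsPMF P)
    (hQ : IsCondPMF Q)
    (hsim : ∀ G : 𝒳 → 𝒴 × M₁ × M₂ → ℕ, IsGuessing G →
      ∃ G₁ : 𝒳 → 𝒴 × M₁ → ℕ, ∃ G₂ : 𝒳 → 𝒴 × M₂ → ℕ, IsGuessing G₁ ∧ IsGuessing G₂ ∧
        ∀ x y m, min (G₁ x (y, m.1)) (G₂ x (y, m.2)) ≤ c * G x (y, m)) :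
    eveAmb ρ P Q ≤ (c : ℝ) ^ ρ * bobGuessAmb ρ P Q := by
  have hcρ : 0 < (c : ℝ) ^ ρ := by positivity
  rw [← div_le_iff₀' hcρ]
  obtain ⟨G, hG⟩ := exists_isGuessing 𝒳 (𝒴 × M₁ × M₂)
  refine le_csInf ⟨_, G, hG, rfl⟩ ?_
  rintro _ ⟨G, hG, rfl⟩
  obtain ⟨G₁, G₂, h₁, h₂, hle⟩ := hsim G hG
  rw [div_le_iff₀' hcρ]
  calc eveAmb ρ P Q ≤ jointExpect P Q fun x y m => ((c : ℝ) * G x (y, m)) ^ ρ :=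
        eveAmb_le_jointExpect hρ hP hQ h₁ h₂ fun x y m => by exact_mod_cast hle x y m
    _ = (c : ℝ) ^ ρ * jointExpect P Q fun x y m => (G x (y, m) : ℝ) ^ ρ := by
        simp only [mul_rpow (Nat.cast_nonneg _) (Nat.cast_nonneg _), jointExpect_const_mul]

lemma eveAmb_le_card_rpow_mul_bobGuessAmb_right [Nonempty M₂] (hρ : 0 ≤ ρ) (hP : IsPMF P)
    (hQ : IsCondPMF Q) : eveAmb ρ P Q ≤ (Fintype.card M₂ : ℝ) ^ ρ * bobGuessAmb ρ P Q := by
  refine eveAmb_le_rpow_mul_bobGuessAmb Fintype.card_pos hρ hP hQ fun G hG => ?_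
  obtain ⟨G₂, h₂⟩ := exists_isGuessing 𝒳 (𝒴 × M₂)
  refine ⟨guessBy fun w x => ⨅ m₂, G x (w.1, w.2, m₂), G₂, isGuessing_guessBy _, h₂,
    fun x y m => (min_le_left _ _).trans ?_⟩
  exact guessBy_iInf_le_card_mul (hG.comp fun p : (𝒴 × M₁) × M₂ => (p.1.1, p.1.2, p.2))
    x (y, m.1) m.2

lemma eveAmb_le_card_rpow_mul_bobGuessAmb_left [Nonempty M₁] (hρ : 0 ≤ ρ) (hP : IsPMF P)
    (hQ : IsCondPMF Q) : eveAmb ρ P Q ≤ (Fintype.card M₁ : ℝ) ^ ρ * bobGuessAmb ρ P Q := by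
  refine eveAmb_le_rpow_mul_bobGuessAmb Fintype.card_pos hρ hP hQ fun G hG => ?_
  obtain ⟨G₁, h₁⟩ := exists_isGuessing 𝒳 (𝒴 × M₁)
  refine ⟨G₁, guessBy fun w x => ⨅ m₁, G x (w.1, m₁, w.2), h₁, isGuessing_guessBy _,
    fun x y m => (min_le_right _ _).trans ?_⟩
  exact guessBy_iInf_le_card_mul (hG.comp fun p : (𝒴 × M₂) × M₁ => (p.1.1, p.2, p.1.2))
    x (y, m.2) m.1

end Eve

/-- Arikan's bound. With `a = 1 / (1 + ρ)` and `T = ∑ p x' ^ a`, the rank of `x` is at most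
`T / p x ^ a`, and `p x * (T / p x ^ a) ^ ρ = p x ^ a * T ^ ρ` because `a + a ρ = 1`. -/
lemma sum_mul_rpow_le_of_le_card {α : Type*} [Fintype α] {ρ : ℝ} (hρ : 0 ≤ ρ) {p : α → ℝ}
    (hp : ∀ x, 0 ≤ p x) {r : α → ℕ} (hr : ∀ x, r x ≤ #{x' | p x ≤ p x'}) :
    ∑ x, p x * (r x : ℝ) ^ ρ ≤ (∑ x, p x ^ (1 / (1 + ρ))) ^ (1 + ρ) := by
  set a : ℝ := 1 / (1 + ρ)
  set T := ∑ x, p x ^ a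
  have ha : 0 ≤ a := by positivity
  have hT : 0 ≤ T := sum_nonneg fun x _ => rpow_nonneg (hp x) a
  have hrank : ∀ x, (r x : ℝ) * p x ^ a ≤ T := fun x => by
    calc (r x : ℝ) * p x ^ a ≤ (#{x' | p x ≤ p x'} : ℕ) * p x ^ a := by
          gcongr; exacts [rpow_nonneg (hp x) a, hr x]
      _ ≤ ∑ x' ∈ {x' | p x ≤ p x'}, p x' ^ a := by
          rw [← nsmul_eq_mul]
          exact card_nsmul_le_sum _ _ _ fun x' hx' =>
            rpow_le_rpow (hp x) (mem_filter.mp hx').2 ha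
      _ ≤ T := sum_le_sum_of_subset_of_nonneg (filter_subset _ _)
          fun x' _ _ => rpow_nonneg (hp x') a
  have hpoint : ∀ x, p x * (r x : ℝ) ^ ρ ≤ p x ^ a * T ^ ρ := fun x => by
    rcases (hp x).eq_or_lt with hx | hx
    · rw [← hx, zero_mul]
      positivity
    have hsplit : p x = p x ^ (a * ρ) * p x ^ a := by
      rw [← rpow_add hx, show a * ρ + a = 1 by simp only [a]; field_simp; ring, rpow_one]
    calc p x * (r x : ℝ) ^ ρ = ((r x : ℝ) * p x ^ a) ^ ρ * p x ^ a := by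
          rw [mul_rpow (by positivity) (by positivity), ← rpow_mul (hp x), mul_assoc, ← hsplit,
            mul_comm]
      _ ≤ T ^ ρ * p x ^ a := by gcongr; exact hrank x
      _ = p x ^ a * T ^ ρ := mul_comm _ _
  calc ∑ x, p x * (r x : ℝ) ^ ρ ≤ ∑ x, p x ^ a * T ^ ρ := sum_le_sum fun x _ => hpoint x
    _ = T ^ (1 + ρ) := by rw [← sum_mul, rpow_add' hT (by positivity), rpow_one]

section Renyi
variable {𝒳 𝒴 M₁ M₂ : Type*} [Fintype 𝒳] [Fintype 𝒴] [Fintype M₁] [Fintype M₂]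
  {ρ : ℝ} {P : 𝒳 → 𝒴 → ℝ} {Q : 𝒳 → 𝒴 → M₁ × M₂ → ℝ}

lemma eveAmb_le_sum_rpow (hρ : 0 ≤ ρ) (hP : IsPMF P) (hQ : IsCondPMF Q) :
    eveAmb ρ P Q ≤ ∑ y, (∑ x, P x y ^ (1 / (1 + ρ))) ^ (1 + ρ) := by
  set G := guessBy fun y x => OrderDual.toDual (P x y)
  obtain ⟨G₂, h₂⟩ := exists_isGuessing 𝒳 (𝒴 × M₂)
  calc eveAmb ρ P Q ≤ jointExpect P Q fun x y _ => (G x y : ℝ) ^ ρ :=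
        eveAmb_le_jointExpect hρ hP hQ ((isGuessing_guessBy _).comp Prod.fst) h₂
          fun x y m => by exact_mod_cast min_le_left _ _
    _ = ∑ y, ∑ x, P x y * (G x y : ℝ) ^ ρ := by rw [jointExpect_eq_sum_sum hQ, sum_comm]
    _ ≤ _ := sum_le_sum fun y _ => sum_mul_rpow_le_of_le_card hρ (fun x => hP.1 x y)
        fun x => (guessBy_le_card _ x y).trans_eq (by simp)

lemma mul_condRenyi_eq_logb (hρ : 0 < ρ) (P : 𝒳 → 𝒴 → ℝ) :
    ρ * condRenyi (1 / (1 + ρ)) P = logb 2 (∑ y, (∑ x, P x y ^ (1 / (1 + ρ))) ^ (1 + ρ)) := by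
  have hcoef : ρ * (1 / (1 + ρ) / (1 - 1 / (1 + ρ))) = 1 := by
    field_simp [hρ.ne']
    ring
  rw [condRenyi, one_div_one_div, ← mul_assoc, hcoef, one_mul]

lemma logb_eveAmb_le_mul_condRenyi (hρ : 0 < ρ) (hP : IsPMF P) (hQ : IsCondPMF Q) :
    logb 2 (eveAmb ρ P Q) ≤ ρ * condRenyi (1 / (1 + ρ)) P := by
  rw [mul_condRenyi_eq_logb hρ]
  exact logb_le_logb_of_le one_lt_two (one_pos.trans_le (one_le_eveAmb hρ.le hP hQ))
    (eveAmb_le_sum_rpow hρ.le hP hQ)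

end Renyi

lemma liminf_logb_div_le {a h : ℕ → ℝ} {c : ℝ} (ha : ∀ n, 1 ≤ a n)
    (hah : ∀ᶠ n in atTop, logb 2 (a n) ≤ h n) (hh : Tendsto (fun n => h n / n) atTop (nhds c)) :
    liminf (fun n => logb 2 (a n) / n) atTop ≤ c := by
  refine (liminf_le_liminf ?_ ?_ hh.isCoboundedUnder_ge).trans_eq hh.liminf_eq
  · filter_upwards [hah] with n hn using div_le_div_of_nonneg_right hn n.cast_nonneg
  · exact isBoundedUnder_of ⟨0, fun n => div_nonneg (logb_nonneg one_lt_two (ha n)) n.cast_nonneg⟩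

lemma tendsto_logb_natCeil_two_rpow_div {R : ℝ} (hR : 0 ≤ R) :
    Tendsto (fun n : ℕ => logb 2 ⌈(2 : ℝ) ^ ((n : ℝ) * R)⌉₊ / n) atTop (nhds R) := by
  have hbounds : ∀ n : ℕ, (n : ℝ) * R ≤ logb 2 ⌈(2 : ℝ) ^ ((n : ℝ) * R)⌉₊ ∧
      logb 2 ⌈(2 : ℝ) ^ ((n : ℝ) * R)⌉₊ ≤ n * R + 1 := fun n => by
    set x : ℝ := 2 ^ ((n : ℝ) * R)
    have hx : 1 ≤ x := one_le_rpow one_le_two (by positivity)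
    constructor
    · calc (n : ℝ) * R = logb 2 x := (logb_rpow two_pos (by norm_num)).symm
        _ ≤ logb 2 ⌈x⌉₊ := logb_le_logb_of_le one_lt_two (by positivity) (Nat.le_ceil x)
    · calc logb 2 ⌈x⌉₊ ≤ logb 2 (2 * x) := logb_le_logb_of_le one_lt_two (by positivity)
            (by linarith [Nat.ceil_lt_add_one (zero_le_one.trans hx)])
        _ = n * R + 1 := by
            rw [logb_mul two_ne_zero (by positivity), logb_self_eq_one one_lt_two,
              logb_rpow two_pos (by norm_num), add_comm]
  refine tendsto_of_tendsto_of_tendsto_of_le_of_le' tendsto_const_nhds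
    (by simpa using tendsto_const_nhds.add (tendsto_one_div_atTop_nhds_zero_nat (𝕜 := ℝ))) ?_ ?_
  · filter_upwards [eventually_gt_atTop 0] with n hn
    rw [le_div_iff₀ (by positivity), mul_comm]
    exact (hbounds n).1
  · filter_upwards [eventually_gt_atTop 0] with n hn
    rw [div_le_iff₀ (by positivity), add_mul, inv_mul_cancel₀ (by positivity), mul_comm R]
    exact (hbounds n).2

lemma liminf_logb_div_le_of_le_natCeil_rpow_mul {a b : ℕ → ℝ} {ρ R : ℝ} (ha : ∀ n, 1 ≤ a n)
    (hb : Tendsto b atTop (nhds 1)) (hR : 0 ≤ R)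
    (hab : ∀ n, a n ≤ (⌈(2 : ℝ) ^ ((n : ℝ) * R)⌉₊ : ℝ) ^ ρ * b n) :
    liminf (fun n => logb 2 (a n) / n) atTop ≤ ρ * R := by
  refine liminf_logb_div_le ha
    (h := fun n => ρ * logb 2 ⌈(2 : ℝ) ^ ((n : ℝ) * R)⌉₊ + logb 2 (b n)) ?_ ?_
  · filter_upwards [hb.eventually_const_lt one_pos] with n hn
    calc logb 2 (a n) ≤ logb 2 ((⌈(2 : ℝ) ^ ((n : ℝ) * R)⌉₊ : ℝ) ^ ρ * b n) :=
          logb_le_logb_of_le one_lt_two (one_pos.trans_le (ha n)) (hab n)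
      _ = _ := by rw [logb_mul (by positivity) hn.ne', logb_rpow_eq_mul_logb_of_pos (by positivity)]
  · have := ((tendsto_logb_natCeil_two_rpow_div hR).const_mul ρ).add
      ((hb.logb (b := 2) one_ne_zero).div_atTop tendsto_natCast_atTop_atTop)
    simpa [add_div, mul_div_assoc] using this

theorem asymptotic_converse_general
    {𝒳 𝒴 : Type*} [Fintype 𝒳] [Fintype 𝒴]
    (ρ : ℝ) (hρ : 0 < ρ)
    (P : ∀ n : ℕ, (Fin n → 𝒳) → (Fin n → 𝒴) → ℝ) (hP : ∀ n, IsPMF (P n))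
    (H : ℝ)
    (hH : Filter.Tendsto (fun n => condRenyi (1 / (1 + ρ)) (P n) / n)
      Filter.atTop (nhds H))
    (R₁ R₂ : ℝ) (hR₁ : 0 < R₁) (hR₂ : 0 < R₂)
    (Q : ∀ n : ℕ, (Fin n → 𝒳) → (Fin n → 𝒴) →
      Fin ⌈(2 : ℝ) ^ ((n : ℝ) * R₁)⌉₊ × Fin ⌈(2 : ℝ) ^ ((n : ℝ) * R₂)⌉₊ → ℝ)
    (hQ : ∀ n, IsCondPMF (Q n))
    (hBob : Filter.Tendsto (fun n => bobGuessAmb ρ (P n) (Q n)) Filter.atTop (nhds 1)) :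
    Filter.liminf (fun n => Real.logb 2 (eveAmb ρ (P n) (Q n)) / n) Filter.atTop ≤
      ρ * min R₁ (min R₂ H) := by
  have hM : ∀ (n : ℕ) (R : ℝ), Nonempty (Fin ⌈(2 : ℝ) ^ ((n : ℝ) * R)⌉₊) :=
    fun n R => ⟨⟨0, by positivity⟩⟩
  have hEve n : 1 ≤ eveAmb ρ (P n) (Q n) := one_le_eveAmb hρ.le (hP n) (hQ n)
  rw [mul_min_of_nonneg _ _ hρ.le, mul_min_of_nonneg _ _ hρ.le]
  refine le_min ?_ (le_min ?_ ?_)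
  · refine liminf_logb_div_le_of_le_natCeil_rpow_mul hEve hBob hR₁.le fun n => ?_
    have := hM n R₁
    simpa using eveAmb_le_card_rpow_mul_bobGuessAmb_left hρ.le (hP n) (hQ n)
  · refine liminf_logb_div_le_of_le_natCeil_rpow_mul hEve hBob hR₂.le fun n => ?_
    have := hM n R₂
    simpa using eveAmb_le_card_rpow_mul_bobGuessAmb_right hρ.le (hP n) (hQ n)
  · refine liminf_logb_div_le hEve
      (Eventually.of_forall fun n => logb_eveAmb_le_mul_condRenyi hρ (hP n) (hQ n)) ?_
    simpa [mul_div_assoc] using hH.const_mul ρ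

theorem asymptotic_converse
    {𝒳 𝒴 : Type*} [Fintype 𝒳] [Fintype 𝒴] [Nonempty 𝒳] [Nonempty 𝒴]
    (ρ : ℝ) (hρ : 0 < ρ)
    (P : ∀ n : ℕ, (Fin n → 𝒳) → (Fin n → 𝒴) → ℝ) (hP : ∀ n, IsPMF (P n))
    (H : ℝ)
    (hH : Filter.Tendsto (fun n => condRenyi (1 / (1 + ρ)) (P n) / n)
      Filter.atTop (nhds H))
    (R₁ R₂ : ℝ) (hR₁ : 0 < R₁) (hR₂ : 0 < R₂)
    (Q : ∀ n : ℕ, (Fin n → 𝒳) → (Fin n → 𝒴) →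
      Fin ⌈(2 : ℝ) ^ ((n : ℝ) * R₁)⌉₊ × Fin ⌈(2 : ℝ) ^ ((n : ℝ) * R₂)⌉₊ → ℝ)
    (hQ : ∀ n, IsCondPMF (Q n))
    (hBob : Filter.Tendsto (fun n => bobGuessAmb ρ (P n) (Q n)) Filter.atTop (nhds 1)) :
    Filter.liminf (fun n => Real.logb 2 (eveAmb ρ (P n) (Q n)) / n) Filter.atTop ≤
      ρ * min R₁ (min R₂ H) :=
  asymptotic_converse_general ρ hρ P hP H hH R₁ R₂ hR₁ hR₂ Q hQ hBob
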